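/- Let d ≥ 1. Every translation invariant probability measure μ on X with density ρ = E_μ[η(0)] > 2d − 1 is not stabilizable. -/

import Mathlib

open MeasureTheory Filter Topology
open scoped ENNReal NNReal

/-- Sites of the lattice `ℤ^d`. -/
abbrev Site (d : ℕ) := Fin d → ℤ

/-- Sandpile configurations: `X = ℕ^{ℤ^d}`. -/
abbrev Config (d : ℕ) := Site d → ℕ

/-- Nearest-neighbor adjacency on `ℤ^d` (`ℓ¹`-distance one). -/
def Adjacent {d : ℕ} (x y : Site d) : Prop :=
  (∑ i, (x i - y i).natAbs) = 1

/-- Sum of the values of `f` over the `2d` nearest neighbors of `y`. -/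
def nbrSum {d : ℕ} {M : Type*} [AddCommMonoid M] (f : Site d → M) (y : Site d) : M :=
  ∑ i : Fin d, (f (Function.update y i (y i + 1)) + f (Function.update y i (y i - 1)))

/-- The left limit `T(t-, x, η)` of a (monotone, `ℕ`-valued) toppling function. -/
noncomputable def leftVal {d : ℕ} (T : NNReal → Site d → Config d → ℕ)
    (t : NNReal) (x : Site d) (η : Config d) : ℕ :=
  sSup ((fun s => T s x η) '' Set.Iio t)

/-- A toppling procedure on `ℤ^d` (Definition 2.1): a measurable map
`T : [0,∞) × ℤ^d × X → ℕ` such that (a) `T(0,x,η) = 0`; (b) `t ↦ T(t,x,η)` is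
right-continuous, nondecreasing, with jumps of size at most one; (c) finitely many
jumps in every finite time interval; (d) no infinite backward chain of topplings. -/
structure TopplingProcedure (d : ℕ) where
  T : NNReal → Site d → Config d → ℕ
  measurable : ∀ x : Site d, Measurable fun p : NNReal × Config d => T p.1 x p.2
  init : ∀ (x : Site d) (η : Config d), T 0 x η = 0
  mono : ∀ (x : Site d) (η : Config d), Monotone fun t => T t x η
  jumpLe : ∀ (x : Site d) (η : Config d) (t : NNReal), T t x η ≤ leftVal T t x η + 1
  rightCont : ∀ (x : Site d) (η : Config d) (t : NNReal),
    ∃ ε : NNReal, 0 < ε ∧ ∀ s, t ≤ s → s < t + ε → T s x η = T t x η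
  finJumps : ∀ (x : Site d) (η : Config d) (b : NNReal),
    {t : NNReal | t ≤ b ∧ leftVal T t x η < T t x η}.Finite
  noBackwardChain : ∀ η : Config d, ¬ ∃ (xs : ℕ → Site d) (ts : ℕ → NNReal),
    (∀ i, Adjacent (xs (i + 1)) (xs i)) ∧ StrictAnti ts ∧
    (∀ i, leftVal T (ts i) (xs i) η < T (ts i) (xs i) η)

namespace TopplingProcedure

variable {d : ℕ}

/-- The configuration `η_t = η − Δ T(t,·,η)` at time `t` (as a `ℤ`-valued function). -/
def configAt (P : TopplingProcedure d) (η : Config d) (t : NNReal) (y : Site d) : ℤ :=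
  (η y : ℤ) + nbrSum (fun x => (P.T t x η : ℤ)) y - 2 * d * (P.T t y η : ℤ)

/-- The configuration `η_{t-}` just before time `t`. -/
noncomputable def configLeft (P : TopplingProcedure d) (η : Config d) (t : NNReal)
    (y : Site d) : ℤ :=
  (η y : ℤ) + nbrSum (fun x => (leftVal P.T t x η : ℤ)) y - 2 * d * (leftVal P.T t y η : ℤ)

/-- Site `x` topples at time `t` if `T(t,x,η) > T(t-,x,η)`. -/
def TopplesAt (P : TopplingProcedure d) (η : Config d) (x : Site d) (t : NNReal) : Prop :=
  leftVal P.T t x η < P.T t x η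

/-- A toppling procedure is legal if only unstable sites are toppled:
whenever `x` topples at time `t > 0`, `η_{t-}(x) ≥ 2d`. -/
def Legal (P : TopplingProcedure d) : Prop :=
  ∀ (η : Config d) (t : NNReal) (x : Site d), 0 < t → P.TopplesAt η x t →
    (2 * d : ℤ) ≤ P.configLeft η t x

/-- `T` is finite for `η` if `T(∞,x,η) = sup_t T(t,x,η) < ∞` for every `x`. -/
def FiniteFor (P : TopplingProcedure d) (η : Config d) : Prop :=
  ∀ x : Site d, BddAbove (Set.range fun t => P.T t x η)

/-- `T(∞,x,η) = sup_{t ≥ 0} T(t,x,η)`. -/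
noncomputable def Tinf (P : TopplingProcedure d) (η : Config d) (x : Site d) : ℕ :=
  sSup (Set.range fun t => P.T t x η)

/-- The limit configuration `η_∞ = η − Δ T(∞,·,η)` (as a `ℤ`-valued function). -/
noncomputable def finalConfig (P : TopplingProcedure d) (η : Config d) (y : Site d) : ℤ :=
  (η y : ℤ) + nbrSum (fun x => (P.Tinf η x : ℤ)) y - 2 * d * (P.Tinf η y : ℤ)

/-- `T` is stabilizing for `η` if it is finite for `η` and the limit configuration
`η_∞` is stable, i.e. takes values in `{0, 1, …, 2d−1}`. -/
def StabilizingFor (P : TopplingProcedure d) (η : Config d) : Prop :=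
  P.FiniteFor η ∧ ∀ y : Site d, 0 ≤ P.finalConfig η y ∧ P.finalConfig η y ≤ 2 * d - 1

end TopplingProcedure

/-- A configuration `η` is stabilizable if there exists a stabilizing legal
toppling procedure for `η`. -/
def Stabilizable {d : ℕ} (η : Config d) : Prop :=
  ∃ P : TopplingProcedure d, P.Legal ∧ P.StabilizingFor η

/-- The shift of a configuration by a lattice vector `v`. -/
def shiftConfig {d : ℕ} (v : Site d) (η : Config d) : Config d := fun x => η (x + v)

/-- A probability measure on `X` is translation invariant if it is invariant
under all shifts of `ℤ^d`. -/
def TransInvariant {d : ℕ} (μ : Measure (Config d)) : Prop :=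
  ∀ v : Site d, Measure.map (shiftConfig v) μ = μ

/-- `μ` is a product measure: under `μ` the coordinates `(η(x))` are i.i.d. -/
def IsProductMeasure {d : ℕ} (μ : Measure (Config d)) : Prop :=
  ProbabilityTheory.iIndepFun
      (fun (x : Site d) (η : Config d) => η x) μ ∧
    ∀ x : Site d, Measure.map (fun η : Config d => η x) μ
      = Measure.map (fun η : Config d => η (0 : Site d)) μ

/-- `x` belongs to the set `T_∞` of sites that topple during stabilization of `η`. -/
def ToppledInf {d : ℕ} (η : Config d) (x : Site d) : Prop :=
  ∃ P : TopplingProcedure d, P.Legal ∧ P.StabilizingFor η ∧ 0 < P.Tinf η x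

/-- `x` belongs to `W_∞ = T_∞ ∪ {x : η_∞(x) > 0}`: `x` topples during stabilization
of `η`, or is nonempty after stabilization. -/
def InWinf {d : ℕ} (η : Config d) (x : Site d) : Prop :=
  ∃ P : TopplingProcedure d, P.Legal ∧ P.StabilizingFor η ∧
    (0 < P.Tinf η x ∨ 0 < P.finalConfig η x)

/-- `y` lies in the cluster of `x` of the set `S`: `x` and `y` are joined by a
nearest-neighbor path inside `S`. -/
def InClusterOf {d : ℕ} (S : Site d → Prop) (x y : Site d) : Prop :=
  ∃ (k : ℕ) (f : ℕ → Site d), f 0 = x ∧ f k = y ∧ (∀ i ≤ k, S (f i)) ∧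
    ∀ i < k, Adjacent (f i) (f (i + 1))

/-!
If `η` is stabilizable, the odometer `u = T(∞,·,η)` satisfies `η + ∑_{nbr} u ≤ 2d·u + (2d − 1)`,
so the least `[0,∞]`-valued solution `m_η` of this inequality is finite. Unlike the odometer of a
particular toppling procedure, `m_η` is the increasing limit of a Kleene iteration, hence a
measurable and shift-covariant function of `η`. Truncating `m_η` at level `N` and integrating
against a translation invariant `μ`, the neighbour sum of `m_η ∧ N` and `2d·(m_η ∧ N)(0)` have the
same finite mean, which leaves `E[η(0); m_η(0) < N] ≤ 2d − 1`; letting `N → ∞` gives `ρ ≤ 2d − 1`.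
-/

section Sandpile

variable {d : ℕ}

lemma nbrSum_mono {f g : Site d → ℝ≥0∞} (h : f ≤ g) (y : Site d) : nbrSum f y ≤ nbrSum g y :=
  Finset.sum_le_sum fun _ _ => add_le_add (h _) (h _)

lemma nbrSum_const {R : Type*} [CommSemiring R] (a : R) (y : Site d) :
    nbrSum (fun _ => a) y = 2 * d * a := by
  simp only [nbrSum, Finset.sum_const, Finset.card_univ, Fintype.card_fin, nsmul_eq_mul]
  ring

lemma nbrSum_natCast {R : Type*} [Semiring R] (u : Site d → ℕ) (y : Site d) :
    nbrSum (fun x => (u x : R)) y = (nbrSum u y : ℕ) := by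
  simp [nbrSum]

lemma nbrSum_iSup {u : ℕ → Site d → ℝ≥0∞} (hu : Monotone u) (y : Site d) :
    nbrSum (⨆ n, u n) y = ⨆ n, nbrSum (u n) y := by
  have hmono : ∀ x, Monotone fun n => u n x := fun x _ _ h => hu h x
  simp only [nbrSum, iSup_apply, ENNReal.iSup_add_iSup_of_monotone (hmono _) (hmono _)]
  exact ENNReal.finsetSum_iSup_of_monotone fun i => (hmono _).add (hmono _)

lemma nbrSum_comp_add_right {M : Type*} [AddCommMonoid M] (f : Site d → M) (v y : Site d) :
    nbrSum (fun x => f (x + v)) y = nbrSum f (y + v) := by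
  have hupdate : ∀ (i : Fin d) (a : ℤ),
      Function.update y i (y i + a) + v = Function.update (y + v) i ((y + v) i + a) := by
    intro i a
    ext j
    rcases eq_or_ne j i with rfl | hji
    · simp only [Pi.add_apply, Function.update_self]; ring
    · simp [Function.update_of_ne hji]
  simp only [nbrSum, sub_eq_add_neg, hupdate]

/-- `u` are (possibly infinite) toppling numbers after which every site holds at most `c`
grains: `η - Δu ≤ c`. -/
def LeavesStable (c : ℝ≥0∞) (η : Config d) (u : Site d → ℝ≥0∞) : Prop :=
  ∀ y, η y + nbrSum u y ≤ 2 * d * u y + c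

namespace TopplingProcedure.StabilizingFor

variable {P : TopplingProcedure d} {η : Config d}

lemma dim_ne_zero (h : P.StabilizingFor η) : d ≠ 0 := by
  have := h.2 0
  omega

lemma leavesStable (h : P.StabilizingFor η) :
    LeavesStable ((2 * d - 1 : ℕ) : ℝ≥0∞) η fun x => P.Tinf η x := by
  intro y
  have hd := h.dim_ne_zero
  have hy := (h.2 y).2
  simp only [finalConfig, nbrSum_natCast] at hy
  rw [nbrSum_natCast]
  have : η y + nbrSum (P.Tinf η) y ≤ 2 * d * P.Tinf η y + (2 * d - 1) := by
    zify [show 1 ≤ 2 * d by omega]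
    linarith
  push_cast
  exact_mod_cast this

end TopplingProcedure.StabilizingFor

lemma LeavesStable.truncate {c : ℝ≥0∞} {η : Config d} {u : Site d → ℝ≥0∞}
    (hu : LeavesStable c η u) (N : ℝ≥0∞) (y : Site d) :
    (if u y < N then (η y : ℝ≥0∞) else 0) + nbrSum (fun x => min (u x) N) y
      ≤ 2 * d * min (u y) N + c := by
  split_ifs with hlt
  · rw [min_eq_left hlt.le]
    exact (add_le_add le_rfl (nbrSum_mono (fun x => min_le_left _ _) y)).trans (hu y)
  · rw [min_eq_right (not_lt.1 hlt), zero_add, ← nbrSum_const N y]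
    exact (nbrSum_mono (fun x => min_le_right _ _) y).trans le_self_add

section MinOdometer

variable (c : ℝ≥0∞) (η : Config d)

noncomputable def odometerStep (u : Site d → ℝ≥0∞) : Site d → ℝ≥0∞ :=
  fun y => (η y + nbrSum u y - c) / (2 * d)

noncomputable def minOdometer : Site d → ℝ≥0∞ :=
  ⨆ n, (odometerStep c η)^[n] 0

variable {c η}

lemma monotone_odometerStep : Monotone (odometerStep c η) := fun _ _ h y => by
  unfold odometerStep
  gcongr
  exact nbrSum_mono h y

lemma odometerStep_le_of_leavesStable {u : Site d → ℝ≥0∞} (hu : LeavesStable c η u) :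
    odometerStep c η u ≤ u := fun y =>
  ENNReal.div_le_of_le_mul <| tsub_le_iff_right.2 <| (hu y).trans_eq <| by rw [mul_comm]

lemma leavesStable_of_odometerStep_le (hd : d ≠ 0) {u : Site d → ℝ≥0∞}
    (hu : odometerStep c η u ≤ u) : LeavesStable c η u := fun y => by
  have := hu y
  rwa [odometerStep, ENNReal.div_le_iff (by simpa using hd) (by simp [ENNReal.mul_eq_top]),
    tsub_le_iff_right, mul_comm] at this

lemma monotone_iterate_odometerStep : Monotone fun n => (odometerStep c η)^[n] 0 :=
  monotone_odometerStep.monotone_iterate_of_le_map zero_le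

lemma minOdometer_le {u : Site d → ℝ≥0∞} (hu : LeavesStable c η u) : minOdometer c η ≤ u := by
  refine iSup_le fun n => ?_
  induction n with
  | zero => exact zero_le
  | succ n ih =>
    rw [Function.iterate_succ_apply']
    exact (monotone_odometerStep ih).trans (odometerStep_le_of_leavesStable hu)

lemma odometerStep_minOdometer_le : odometerStep c η (minOdometer c η) ≤ minOdometer c η := by
  intro y
  rw [odometerStep, minOdometer, nbrSum_iSup monotone_iterate_odometerStep, ENNReal.add_iSup,
    ENNReal.iSup_sub, ENNReal.iSup_div, iSup_apply]
  exact iSup_le fun n => le_iSup_of_le (n + 1) <| by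
    rw [Function.iterate_succ_apply']
    rfl

lemma leavesStable_minOdometer (hd : d ≠ 0) : LeavesStable c η (minOdometer c η) :=
  leavesStable_of_odometerStep_le hd odometerStep_minOdometer_le

end MinOdometer

lemma measurable_iterate_odometerStep (c : ℝ≥0∞) (n : ℕ) (y : Site d) :
    Measurable fun η : Config d => (odometerStep c η)^[n] 0 y := by
  induction n generalizing y with
  | zero => exact measurable_const
  | succ n ih =>
    simp only [Function.iterate_succ_apply', odometerStep, nbrSum]
    have hη : Measurable fun η : Config d => (η y : ℝ≥0∞) :=
      measurable_from_top.comp (measurable_pi_apply y)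
    exact ((hη.add (Finset.measurable_sum _ fun i _ => (ih _).add (ih _))).sub_const c).div_const _

lemma measurable_minOdometer (c : ℝ≥0∞) (y : Site d) :
    Measurable fun η : Config d => minOdometer c η y := by
  simp only [minOdometer, iSup_apply]
  exact .iSup fun n => measurable_iterate_odometerStep c n y

lemma semiconj_odometerStep_shiftConfig (c : ℝ≥0∞) (η : Config d) (v : Site d) :
    Function.Semiconj (fun u x => u (x + v)) (odometerStep c η)
      (odometerStep c (shiftConfig v η)) := fun u => by
  ext y
  simp only [odometerStep, shiftConfig, nbrSum_comp_add_right]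

lemma minOdometer_shiftConfig (c : ℝ≥0∞) (η : Config d) (v y : Site d) :
    minOdometer c (shiftConfig v η) y = minOdometer c η (y + v) := by
  simp only [minOdometer, iSup_apply]
  refine iSup_congr fun n => ?_
  exact congrFun ((semiconj_odometerStep_shiftConfig c η v).iterate_right n 0) y |>.symm

lemma measurable_shiftConfig (v : Site d) : Measurable (shiftConfig v : Config d → Config d) :=
  measurable_pi_lambda _ fun x => measurable_pi_apply (x + v)

section Integration

variable {μ : Measure (Config d)} {g : Config d → Site d → ℝ≥0∞}

lemma lintegral_nbrSum (hg : ∀ y, Measurable fun η => g η y) (y : Site d) :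
    ∫⁻ η, nbrSum (g η) y ∂μ = nbrSum (fun x => ∫⁻ η, g η x ∂μ) y := by
  simp only [nbrSum]
  rw [lintegral_finsetSum _ fun i _ => by fun_prop]
  simp only [lintegral_add_left (hg _)]

lemma lintegral_eq_of_covariant (hinv : TransInvariant μ) (hg : Measurable fun η => g η 0)
    (hcov : ∀ v η y, g (shiftConfig v η) y = g η (y + v)) (y : Site d) :
    ∫⁻ η, g η y ∂μ = ∫⁻ η, g η 0 ∂μ := by
  calc ∫⁻ η, g η y ∂μ = ∫⁻ η, g (shiftConfig y η) 0 ∂μ := by simp only [hcov, zero_add]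
    _ = ∫⁻ η, g η 0 ∂μ :=
      (MeasurePreserving.mk (measurable_shiftConfig y) (hinv y)).lintegral_comp hg

/-- Mass balance: under a translation invariant `μ`, the mass a site receives from the topplings
`g` of its neighbours and the mass `2d · g` it sends away have the same finite mean. -/
lemma lintegral_le_of_add_nbrSum_le [IsProbabilityMeasure μ] (hinv : TransInvariant μ)
    {a : Config d → ℝ≥0∞} {c : ℝ≥0∞} (ha : Measurable a) (hg : ∀ y, Measurable fun η => g η y)
    (hcov : ∀ v η y, g (shiftConfig v η) y = g η (y + v)) (hfin : ∫⁻ η, g η 0 ∂μ ≠ ∞)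
    (hle : ∀ η, a η + nbrSum (g η) 0 ≤ 2 * d * g η 0 + c) :
    ∫⁻ η, a η ∂μ ≤ c := by
  set I := ∫⁻ η, g η 0 ∂μ
  have hnbr : ∫⁻ η, nbrSum (g η) 0 ∂μ = 2 * d * I := by
    rw [lintegral_nbrSum hg, ← nbrSum_const I 0]
    simp only [lintegral_eq_of_covariant hinv (hg 0) hcov, I]
  have hmass : ∫⁻ η, a η ∂μ + 2 * d * I ≤ c + 2 * d * I :=
    calc ∫⁻ η, a η ∂μ + 2 * d * I = ∫⁻ η, (a η + nbrSum (g η) 0) ∂μ := by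
          rw [lintegral_add_left ha, hnbr]
      _ ≤ ∫⁻ η, (2 * d * g η 0 + c) ∂μ := lintegral_mono hle
      _ = c + 2 * d * I := by
          rw [lintegral_add_right _ measurable_const, lintegral_const_mul _ (hg 0), lintegral_const,
            measure_univ, mul_one, add_comm]
  have hI : 2 * d * I ≠ ∞ := ENNReal.mul_ne_top (by simp [ENNReal.mul_eq_top]) hfin
  exact (ENNReal.add_le_add_iff_right hI).1 hmass

end Integration

section DensityBound

variable {μ : Measure (Config d)} [IsProbabilityMeasure μ] {c : ℝ≥0∞}

lemma setLIntegral_minOdometer_lt_le (hinv : TransInvariant μ) (hd : d ≠ 0) (N : ℕ) :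
    ∫⁻ η in {η | minOdometer c η 0 < N}, (η 0 : ℝ≥0∞) ∂μ ≤ c := by
  have hS : MeasurableSet {η : Config d | minOdometer c η 0 < N} :=
    measurableSet_lt (measurable_minOdometer c 0) measurable_const
  rw [← lintegral_indicator hS]
  refine lintegral_le_of_add_nbrSum_le hinv (g := fun η y => min (minOdometer c η y) N)
    ((measurable_from_top.comp (measurable_pi_apply 0)).indicator hS)
    (fun y => (measurable_minOdometer c y).min measurable_const)
    (fun v η y => by simp only [minOdometer_shiftConfig])
    (ne_top_of_le_ne_top (ENNReal.natCast_ne_top N) ?_) fun η => ?_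
  · exact (lintegral_mono fun η => min_le_right _ _).trans_eq (by simp)
  · simpa only [Set.indicator_apply, Set.mem_ofPred_eq] using
      (leavesStable_minOdometer hd).truncate N 0

theorem lintegral_le_of_ae_leavesStable (hinv : TransInvariant μ) (hd : d ≠ 0)
    (h : ∀ᵐ η ∂μ, ∃ u, LeavesStable c η u ∧ u 0 ≠ ∞) :
    ∫⁻ η, (η 0 : ℝ≥0∞) ∂μ ≤ c := by
  have hfin : ∀ᵐ η ∂μ, η ∈ ⋃ N : ℕ, {η | minOdometer c η 0 < N} :=
    h.mono fun η ⟨u, hu, hu0⟩ =>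
      Set.mem_iUnion.2 (ENNReal.exists_nat_gt ((minOdometer_le hu 0).trans_lt hu0.lt_top).ne)
  have hmono : Monotone fun N : ℕ => {η : Config d | minOdometer c η 0 < N} :=
    fun _ _ hNM η (hη : minOdometer c η 0 < _) => hη.trans_le (Nat.cast_le.2 hNM)
  rw [← Measure.restrict_eq_self_of_ae_mem hfin,
    setLIntegral_iUnion_of_directed _ hmono.directed_le]
  exact iSup_le (setLIntegral_minOdometer_lt_le hinv hd)

end DensityBound

end Sandpile

theorem statement7_general (d : ℕ) (μ : Measure (Config d))
    [IsProbabilityMeasure μ] (hinv : TransInvariant μ)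
    (hmean : ((2 * d - 1 : ℕ) : ℝ≥0∞) < ∫⁻ η, (η (0 : Site d) : ℝ≥0∞) ∂μ) :
    ¬ ∀ᵐ η ∂μ, Stabilizable η := by
  intro h
  obtain ⟨_, _, -, hstab⟩ := h.exists
  refine hmean.not_ge (lintegral_le_of_ae_leavesStable hinv hstab.dim_ne_zero ?_)
  exact h.mono fun η ⟨_, _, hP⟩ => ⟨_, hP.leavesStable, ENNReal.natCast_ne_top _⟩

/-- Theorem 3.1 (upper bound): every translation invariant probability measure with
density `ρ = E_μ[η(0)] > 2d − 1` is not stabilizable. -/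
theorem statement7 (d : ℕ) (hd : 1 ≤ d) (μ : Measure (Config d))
    [IsProbabilityMeasure μ] (hinv : TransInvariant μ)
    (hmean : ((2 * d - 1 : ℕ) : ℝ≥0∞) < ∫⁻ η, (η (0 : Site d) : ℝ≥0∞) ∂μ) :
    ¬ ∀ᵐ η ∂μ, Stabilizable η :=
  statement7_general d μ hinv hmean
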